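/- Transfer of frame definability from K to KbiG and KG²: let 𝕂 be a class of crisp frames definable in the classical modal logic K by a set Σ of classical modal formulas (i.e. F ∈ 𝕂 iff F ⊨_K σ for all σ ∈ Σ), and let Σ^∼ = {σ^∼ : σ ∈ Σ}, where σ^∼ replaces each propositional variable p of σ by ∼∼p. Then 𝕂 is definable in KbiG and in KG²: for every crisp frame F, F ∈ 𝕂 iff F ⊨_{KbiG} σ^∼ for all σ ∈ Σ, and F ∈ 𝕂 iff F ⊨_{KG²} σ^∼ for all σ ∈ Σ. -/

import Mathlib

/- Truth values: the real unit interval [0,1] with its complete lattice structure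
   (so `sInf ∅ = 1` and `sSup ∅ = 0`). -/
instance : Fact ((0:ℝ) ≤ 1) := ⟨zero_le_one⟩

abbrev TV : Type := unitInterval

/-- Gödel implication: `a →G b = 1` if `a ≤ b`, else `b`. -/
noncomputable def gimp (a b : TV) : TV := if a ≤ b then 1 else b

/-- Gödel coimplication: `a ⧀G b = 0` if `a ≤ b`, else `a`. -/
noncomputable def gcoimp (a b : TV) : TV := if a ≤ b then 0 else a

/-- Formulas of `biL¬_{□,◇}` over the countable variable set `ℕ`. -/
inductive Formula : Type
  | var : ℕ → Formula
  | neg : Formula → Formula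
  | and : Formula → Formula → Formula
  | or : Formula → Formula → Formula
  | imp : Formula → Formula → Formula
  | coimp : Formula → Formula → Formula
  | box : Formula → Formula
  | dia : Formula → Formula

/-- KG² valuation pair `(v₁, v₂)` on a crisp frame `(W, R)`:
`(kval R v φ w).1 = v₁(φ,w)` and `(kval R v φ w).2 = v₂(φ,w)`. -/
noncomputable def kval {W : Type} (R : W → W → Prop) (v : ℕ → W → TV × TV) :
    Formula → W → TV × TV
  | .var p, w => v p w
  | .neg φ, w => ((kval R v φ w).2, (kval R v φ w).1)
  | .and φ ψ, w => ((kval R v φ w).1 ⊓ (kval R v ψ w).1, (kval R v φ w).2 ⊔ (kval R v ψ w).2)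
  | .or φ ψ, w => ((kval R v φ w).1 ⊔ (kval R v ψ w).1, (kval R v φ w).2 ⊓ (kval R v ψ w).2)
  | .imp φ ψ, w =>
      (gimp (kval R v φ w).1 (kval R v ψ w).1, gcoimp (kval R v ψ w).2 (kval R v φ w).2)
  | .coimp φ ψ, w =>
      (gcoimp (kval R v φ w).1 (kval R v ψ w).1, gimp (kval R v ψ w).2 (kval R v φ w).2)
  | .box φ, w =>
      (sInf ((fun w' => (kval R v φ w').1) '' {w' | R w w'}),
       sSup ((fun w' => (kval R v φ w').2) '' {w' | R w w'}))
  | .dia φ, w =>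
      (sSup ((fun w' => (kval R v φ w').1) '' {w' | R w w'}),
       sInf ((fun w' => (kval R v φ w').2) '' {w' | R w w'}))

/-- ¬-free formulas: the language `biL_{□,◇}` over the countable variable set `ℕ`. -/
inductive FormulaB : Type
  | var : ℕ → FormulaB
  | and : FormulaB → FormulaB → FormulaB
  | or : FormulaB → FormulaB → FormulaB
  | imp : FormulaB → FormulaB → FormulaB
  | coimp : FormulaB → FormulaB → FormulaB
  | box : FormulaB → FormulaB
  | dia : FormulaB → FormulaB

/-- KbiG valuation on a crisp frame `(W, R)` (`inf ∅ = 1`, `sup ∅ = 0`). -/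
noncomputable def bval {W : Type} (R : W → W → Prop) (v : ℕ → W → TV) :
    FormulaB → W → TV
  | .var p, w => v p w
  | .and φ ψ, w => bval R v φ w ⊓ bval R v ψ w
  | .or φ ψ, w => bval R v φ w ⊔ bval R v ψ w
  | .imp φ ψ, w => gimp (bval R v φ w) (bval R v ψ w)
  | .coimp φ ψ, w => gcoimp (bval R v φ w) (bval R v ψ w)
  | .box φ, w => sInf ((fun w' => bval R v φ w') '' {w' | R w w'})
  | .dia φ, w => sSup ((fun w' => bval R v φ w') '' {w' | R w w'})

/-- Embedding of the ¬-free language `biL_{□,◇}` into `biL¬_{□,◇}`. -/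
def FormulaB.emb : FormulaB → Formula
  | .var p => .var p
  | .and φ ψ => .and φ.emb ψ.emb
  | .or φ ψ => .or φ.emb ψ.emb
  | .imp φ ψ => .imp φ.emb ψ.emb
  | .coimp φ ψ => .coimp φ.emb ψ.emb
  | .box φ => .box φ.emb
  | .dia φ => .dia φ.emb

/-- `𝟏 := p → p`. -/
def bone : FormulaB := .imp (.var 0) (.var 0)

/-- `𝟎 := p ⧀ p`. -/
def bzero : FormulaB := .coimp (.var 0) (.var 0)

/-- Gödel negation `∼φ := φ → 𝟎`. -/
def bnegG (φ : FormulaB) : FormulaB := .imp φ bzero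

/-- Baaz delta `Δτ := ∼(𝟏 ⧀ τ)`. -/
def bDelta (τ : FormulaB) : FormulaB := bnegG (.coimp bone τ)

/-- The formula `𝟏 ⧀ ◇((p ⧀ q) ∧ q)` with `p := var 0`, `q := var 1`. -/
def phiFin : FormulaB := .coimp bone (.dia (.and (.coimp (.var 0) (.var 1)) (.var 1)))

/-- Classical modal formulas: built from variables and `𝟎` using `∧, ∨, →, □, ◇`. -/
inductive CForm : Type
  | fls : CForm
  | var : ℕ → CForm
  | and : CForm → CForm → CForm
  | or : CForm → CForm → CForm
  | imp : CForm → CForm → CForm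
  | box : CForm → CForm
  | dia : CForm → CForm

/-- Standard two-valued Kripke semantics on a crisp frame `(W, R)`. -/
def cval {W : Type} (R : W → W → Prop) (v : ℕ → W → Prop) : CForm → W → Prop
  | .fls, _ => False
  | .var p, w => v p w
  | .and φ ψ, w => cval R v φ w ∧ cval R v ψ w
  | .or φ ψ, w => cval R v φ w ∨ cval R v ψ w
  | .imp φ ψ, w => cval R v φ w → cval R v ψ w
  | .box φ, w => ∀ w', R w w' → cval R v φ w'
  | .dia φ, w => ∃ w', R w w' ∧ cval R v φ w'

/-- The translation `φ ↦ φ^∼` replacing every variable `p` by `∼∼p`. -/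
def CForm.trans : CForm → FormulaB
  | .fls => bzero
  | .var p => bnegG (bnegG (.var p))
  | .and φ ψ => .and φ.trans ψ.trans
  | .or φ ψ => .or φ.trans ψ.trans
  | .imp φ ψ => .imp φ.trans ψ.trans
  | .box φ => .box φ.trans
  | .dia φ => .dia φ.trans

/-- A crisp frame: a nonempty type of worlds with a binary accessibility relation. -/
structure CFrame : Type 1 where
  W : Type
  ne : Nonempty W
  R : W → W → Prop

/-- Validity of a classical modal formula on a crisp frame. -/
def CFrame.validK (F : CFrame) (φ : CForm) : Prop :=
  ∀ (v : ℕ → F.W → Prop) (w : F.W), cval F.R v φ w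

/-- KbiG-validity of a `biL_{□,◇}` formula on a crisp frame. -/
def CFrame.validKbiG (F : CFrame) (φ : FormulaB) : Prop :=
  ∀ (v : ℕ → F.W → TV) (w : F.W), bval F.R v φ w = 1

/-- KG²-validity of a `biL¬_{□,◇}` formula on a crisp frame. -/
def CFrame.validKG2 (F : CFrame) (φ : Formula) : Prop :=
  ∀ (v : ℕ → F.W → TV × TV) (w : F.W),
    (kval F.R v φ w).1 = 1 ∧ (kval F.R v φ w).2 = 0

/-!
Each `∼∼p` takes only the values `0` and `1`, being `1` exactly where `p` is positive, and on
`{0, 1}` the bi-Gödel operations and the infima and suprema over successors act as the Boolean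
connectives and the classical modalities. So `σ^∼` takes in a KbiG model the classical truth value
of `σ` under the valuation "`p` is positive"; as every classical valuation arises in this way,
`σ^∼` is KbiG-valid on a frame iff `σ` is K-valid.

On ¬-free formulas `v₁` is computed exactly as in KbiG, and the involution `x ↦ 1 - x` turns the
clauses for `v₂` into those for `v₁`, so `1 - v₂` is a KbiG valuation too. Hence KG²-validity of a
¬-free formula coincides with its KbiG-validity.
-/

lemma gcoimp_self (a : TV) : gcoimp a a = 0 := if_pos le_rfl

lemma gimp_zero (a : TV) : gimp a 0 = if a = 0 then 1 else 0 := by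
  simp only [gimp, le_zero_iff]

open Classical in
lemma sInf_image_ite_one_zero {β : Type*} (s : Set β) (P : β → Prop) :
    sInf ((fun x => if P x then (1 : TV) else 0) '' s) = if ∀ x ∈ s, P x then 1 else 0 := by
  split_ifs with h
  · exact sInf_eq_top.2 (by rintro _ ⟨x, hx, rfl⟩; exact if_pos (h x hx))
  · push Not at h
    obtain ⟨x, hx, hPx⟩ := h
    exact le_zero_iff.1 (sInf_le_of_le ⟨x, hx, if_neg hPx⟩ le_rfl)

open Classical in
lemma sSup_image_ite_one_zero {β : Type*} (s : Set β) (P : β → Prop) :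
    sSup ((fun x => if P x then (1 : TV) else 0) '' s) = if ∃ x ∈ s, P x then 1 else 0 := by
  split_ifs with h
  · obtain ⟨x, hx, hPx⟩ := h
    exact top_le_iff.1 (le_sSup_of_le ⟨x, hx, if_pos hPx⟩ le_rfl)
  · push Not at h
    exact sSup_eq_bot.2 (by rintro _ ⟨x, hx, rfl⟩; exact if_neg (h x hx))

open Classical in
theorem bval_trans {W : Type} (R : W → W → Prop) (v : ℕ → W → TV) (φ : CForm) (w : W) :
    bval R v φ.trans w = if cval R (fun p w => v p w ≠ 0) φ w then 1 else 0 := by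
  induction φ generalizing w with
  | fls => simp [CForm.trans, bzero, bval, gcoimp_self, cval]
  | var p =>
    simp only [CForm.trans, bnegG, bzero, bval, gcoimp_self, gimp_zero, cval]
    split_ifs <;> simp_all
  | and φ ψ ihφ ihψ =>
    simp only [CForm.trans, bval, cval, ihφ, ihψ]
    split_ifs <;> simp_all
  | or φ ψ ihφ ihψ =>
    simp only [CForm.trans, bval, cval, ihφ, ihψ]
    split_ifs <;> simp_all
  | imp φ ψ ihφ ihψ =>
    simp only [CForm.trans, bval, cval, gimp, ihφ, ihψ]
    split_ifs <;> simp_all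
  | box φ ih =>
    simp only [CForm.trans, bval, cval, ih, sInf_image_ite_one_zero]
    congr
  | dia φ ih =>
    simp only [CForm.trans, bval, cval, ih, sSup_image_ite_one_zero]
    congr

theorem CFrame.validKbiG_trans_iff (F : CFrame) (φ : CForm) :
    F.validKbiG φ.trans ↔ F.validK φ := by
  classical
  constructor
  · intro h u w
    have hu : (fun p w => (if u p w then (1 : TV) else 0) ≠ 0) = u := by
      ext p w; by_cases hpw : u p w <;> simp [hpw]
    simpa [bval_trans, hu] using h (fun p w => if u p w then 1 else 0) w
  · intro h v w
    rw [bval_trans, if_pos (h _ w)]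

theorem kval_emb_fst {W : Type} (R : W → W → Prop) (v : ℕ → W → TV × TV) (φ : FormulaB)
    (w : W) : (kval R v φ.emb w).1 = bval R (fun p w => (v p w).1) φ w := by
  induction φ generalizing w <;> simp [FormulaB.emb, kval, bval, *]

section Symm

open unitInterval

lemma unitInterval.symm_sSup (s : Set TV) : σ (sSup s) = sInf (σ '' s) :=
  strictAnti_symm.antitone.map_sSup_of_continuousAt continuous_symm.continuousAt symm_zero

lemma unitInterval.symm_sInf (s : Set TV) : σ (sInf s) = sSup (σ '' s) :=
  strictAnti_symm.antitone.map_sInf_of_continuousAt continuous_symm.continuousAt symm_one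

lemma unitInterval.symm_gimp (a b : TV) : σ (gimp a b) = gcoimp (σ b) (σ a) := by
  simp only [gimp, gcoimp, symm_le_symm]
  split_ifs <;> simp [symm_one]

lemma unitInterval.symm_gcoimp (a b : TV) : σ (gcoimp a b) = gimp (σ b) (σ a) := by
  simp only [gimp, gcoimp, symm_le_symm]
  split_ifs <;> simp [symm_zero]

theorem kval_emb_snd {W : Type} (R : W → W → Prop) (v : ℕ → W → TV × TV) (φ : FormulaB)
    (w : W) : σ (kval R v φ.emb w).2 = bval R (fun p w => σ (v p w).2) φ w := by
  induction φ generalizing w <;>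
    simp [FormulaB.emb, kval, bval, strictAnti_symm.antitone.map_max,
      strictAnti_symm.antitone.map_min, symm_gimp, symm_gcoimp, symm_sSup, symm_sInf,
      Set.image_image, *]

theorem CFrame.validKG2_emb_iff (F : CFrame) (φ : FormulaB) :
    F.validKG2 φ.emb ↔ F.validKbiG φ := by
  constructor
  · intro h v w
    simpa [kval_emb_fst] using (h (fun p w => (v p w, 0)) w).1
  · intro h v w
    refine ⟨by rw [kval_emb_fst]; exact h _ w, ?_⟩
    rw [← symm_eq_one, kval_emb_snd]
    exact h _ w

end Symm

/-- transfer of frame definability from classical `K` to KbiG and KG²: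
if `𝕂` is defined in `K` by `S`, then `𝕂` is defined in KbiG and in KG² by
`S^∼ = {σ^∼ : σ ∈ S}`. -/
theorem stmt19 (K : Set CFrame) (S : Set CForm)
    (hdef : ∀ F : CFrame, F ∈ K ↔ ∀ σ ∈ S, F.validK σ) :
    (∀ F : CFrame, F ∈ K ↔ ∀ σ ∈ S, F.validKbiG σ.trans) ∧
    (∀ F : CFrame, F ∈ K ↔ ∀ σ ∈ S, F.validKG2 σ.trans.emb) := by
  simp only [CFrame.validKG2_emb_iff, CFrame.validKbiG_trans_iff]
  exact ⟨hdef, hdef⟩
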